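/- arXiv:1312.7677 — 4 statements merged into one kernel-verified Lean document; each statement's English description precedes it below -/
import Mathlib

section
/- The Bott-type involution associated with a self-adjoint operator: let H be a complex Hilbert space and T a bounded self-adjoint operator on H. Define R : H ⊕ H → H ⊕ H by R(ξ, η) := ((1 + T²)^{-1}(T²ξ + Tη), (1 + T²)^{-1}(Tξ + η)), and set F := 2R − 1. Then R is an orthogonal projection (R* = R and R² = R), and consequently F is a self-adjoint involution: F* = F and F² = 1. -/
/-!
Let `J ζ = (T ζ, ζ)`, so that `J* (x, y) = T x + y` and `J* J = 1 + T²`. Since `T` commutes with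
`S = (1 + T²)⁻¹`, the operator `R` is `J S J*`, which is self-adjoint because `S` is, and
idempotent because `S J* J = 1`. For any self-adjoint idempotent `R`, `2R − 1` is a self-adjoint
involution.
-/

noncomputable section

section ProdForm

variable (𝕜 : Type*) {H : Type*} [RCLike 𝕜] [NormedAddCommGroup H] [InnerProductSpace 𝕜 H]

/-- Symmetry for the `ℓ²` inner product of `H ⊕ H` (Mathlib's `H × H` has the sup norm). -/
def IsSymmetricOnProd (R : H × H → H × H) : Prop :=
  ∀ p q : H × H, (inner 𝕜 ((R p).1) q.1 : 𝕜) + inner 𝕜 ((R p).2) q.2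
    = inner 𝕜 p.1 ((R q).1) + inner 𝕜 p.2 ((R q).2)

variable {𝕜}

theorem IsSymmetricOnProd.two_smul_sub_self {R : H × H → H × H}
    (hR : IsSymmetricOnProd 𝕜 R) :
    IsSymmetricOnProd 𝕜 (fun p => (2 : 𝕜) • R p - p) := by
  intro p q
  simp only [Prod.fst_sub, Prod.snd_sub, Prod.smul_fst, Prod.smul_snd, inner_sub_left,
    inner_sub_right, inner_smul_left, inner_smul_right, map_ofNat]
  linear_combination 2 * hR p q

end ProdForm

theorem LinearMap.involutive_two_smul_sub_self {R M : Type*} [Ring R] [AddCommGroup M]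
    [Module R M] (f : M →ₗ[R] M) (hf : ∀ x, f (f x) = f x) :
    Function.Involutive (fun x => (2 : R) • f x - x) := by
  intro x
  dsimp only
  rw [map_sub, map_smul, hf]
  simp only [smul_sub, two_smul]
  abel

section GraphProjection

variable {𝕜 H : Type*} [RCLike 𝕜] [NormedAddCommGroup H] [InnerProductSpace 𝕜 H]

def graphProjection (T S : H →ₗ[𝕜] H) : H × H →ₗ[𝕜] H × H :=
  T.prod LinearMap.id ∘ₗ S ∘ₗ T.coprod LinearMap.id

@[simp]
theorem graphProjection_apply (T S : H →ₗ[𝕜] H) (p : H × H) :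
    graphProjection T S p = (T (S (T p.1 + p.2)), S (T p.1 + p.2)) :=
  rfl

theorem graphProjection_idem {T S : H →ₗ[𝕜] H} (hS : ∀ x, S (T (T x) + x) = x)
    (p : H × H) :
    graphProjection T S (graphProjection T S p) = graphProjection T S p := by
  simp only [graphProjection_apply, hS]

theorem LinearMap.IsSymmetric.inner_graph {T : H →ₗ[𝕜] H} (hT : T.IsSymmetric) (x : H)
    (q : H × H) :
    (inner 𝕜 (T x) q.1 : 𝕜) + inner 𝕜 x q.2 = inner 𝕜 x (T q.1 + q.2) := by
  rw [hT, inner_add_right]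

theorem isSymmetricOnProd_graphProjection {T S : H →ₗ[𝕜] H} (hT : T.IsSymmetric)
    (hS : S.IsSymmetric) : IsSymmetricOnProd 𝕜 (graphProjection T S) := by
  intro p q
  simp only [graphProjection_apply]
  rw [hT.inner_graph, hS, ← inner_conj_symm p.1, ← inner_conj_symm p.2, ← map_add,
    hT.inner_graph, inner_conj_symm]

end GraphProjection

theorem Commute.ringInverse_right {M₀ : Type*} [MonoidWithZero M₀] {a b : M₀}
    (h : Commute a b) :
    Commute a (Ring.inverse b) := by
  by_cases hb : IsUnit b
  · obtain ⟨u, rfl⟩ := hb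
    rw [Ring.inverse_unit]
    exact h.units_inv_right
  · rw [Ring.inverse_non_unit _ hb]
    exact Commute.zero_right a

theorem IsSelfAdjoint.isUnit_one_add_mul_self {A : Type*} [CStarAlgebra A] [PartialOrder A]
    [StarOrderedRing A] {a : A} (ha : IsSelfAdjoint a) : IsUnit (1 + a * a) := by
  have h := isStrictlyPositive_one.add_nonneg (star_mul_self_nonneg a)
  rw [ha.star_eq] at h
  exact h.isUnit

/-- The Bott-type involution associated with a self-adjoint operator: let
`H` be a complex Hilbert space and `T` a bounded self-adjoint operator on `H`. With
`S := (1 + T²)⁻¹` (which exists since `T² ≥ 0`), define `R : H ⊕ H → H ⊕ H` by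
`R(ξ, η) := (S(T²ξ + Tη), S(Tξ + η))` and set `F := 2R − 1`. Then `R` is an orthogonal
projection (`R* = R`, `R² = R`, self-adjointness expressed via the direct-sum inner product
`⟪(ξ₁,ξ₂),(η₁,η₂)⟫ = ⟪ξ₁,η₁⟫ + ⟪ξ₂,η₂⟫`), and consequently `F` is a self-adjoint
involution: `F* = F` and `F² = 1`. -/
theorem statement14 {H : Type*} [NormedAddCommGroup H] [InnerProductSpace ℂ H]
    [CompleteSpace H] (T : H →L[ℂ] H) (hT : IsSelfAdjoint T) :
    let S : H →L[ℂ] H := Ring.inverse (1 + T * T)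
    let R : H × H → H × H := fun p => (S (T (T p.1) + T p.2), S (T p.1 + p.2))
    let F : H × H → H × H := fun p => (2 : ℂ) • R p - p
    (∀ p q : H × H,
        (inner ℂ ((R p).1) q.1 : ℂ) + inner ℂ ((R p).2) q.2
          = inner ℂ p.1 ((R q).1) + inner ℂ p.2 ((R q).2)) ∧
    (∀ p : H × H, R (R p) = R p) ∧
    (∀ p q : H × H,
        (inner ℂ ((F p).1) q.1 : ℂ) + inner ℂ ((F p).2) q.2
          = inner ℂ p.1 ((F q).1) + inner ℂ p.2 ((F q).2)) ∧
    (∀ p : H × H, F (F p) = p) := by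
  intro S R
  have hTT : IsSelfAdjoint (T * T) := (hT.commute_iff hT).mp (Commute.refl T)
  have hS : IsSelfAdjoint S := ((IsSelfAdjoint.one _).add hTT).ringInverse
  have hTS : Commute T S := ((Commute.one_right T).add_right ((Commute.refl T).mul_right
    (Commute.refl T))).ringInverse_right
  have hTS_apply : ∀ x, T (S x) = S (T x) := fun x => congrArg (· x) hTS.eq
  have hS_inv : ∀ x, S (T (T x) + x) = x := fun x => by
    rw [add_comm]
    exact congrArg (· x) (Ring.inverse_mul_cancel _ hT.isUnit_one_add_mul_self)
  have hR : R = graphProjection (T : H →ₗ[ℂ] H) S := funext fun p => by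
    simp only [R, graphProjection_apply, ContinuousLinearMap.coe_coe, hTS_apply, map_add]
  clear_value R
  subst hR
  have hRidem := graphProjection_idem (T := (T : H →ₗ[ℂ] H)) hS_inv
  have hRsymm := isSymmetricOnProd_graphProjection hT.isSymmetric hS.isSymmetric
  exact ⟨hRsymm, hRidem, hRsymm.two_smul_sub_self,
    (graphProjection (T : H →ₗ[ℂ] H) S).involutive_two_smul_sub_self hRidem⟩
end
end

section
/- Commutator estimate for the square root of a strictly positive operator: for all real numbers 0 < ε ≤ R there exists a constant C > 0 such that for every complex Hilbert space H, every self-adjoint bounded operator S on H with ε·1 ≤ S ≤ R·1, and every bounded operator a on H, ‖[S^{1/2}, a]‖ ≤ C·‖[S, a]‖, where S^{1/2} denotes the positive square root of S given by the continuous functional calculus and [A, B] := AB − BA. -/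
/-!
`X := [√S, a]` solves the Sylvester equation `√S X + X √S = [S, a]`, and `√S ≥ √ε`.
For a positive element `b ≥ δ > 0` the map `X ↦ b X + X b` is bounded below by `2δ`:
writing `b = c (1 - k)` with `c = ‖b‖` and `0 ≤ k ≤ 1 - δ/c` gives
`‖b X + X b‖ ≥ c (2 - 2‖k‖) ‖X‖ ≥ 2δ ‖X‖`. Hence `C = 1 / (2√ε)` works.
-/

section CStarAlgebra

variable {A : Type*} [CStarAlgebra A] [PartialOrder A] [StarOrderedRing A]

theorem two_mul_mul_norm_le_norm_mul_add_mul {b : A} {δ : ℝ} (hδ : 0 < δ)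
    (hb : algebraMap ℝ A δ ≤ b) (x : A) :
    2 * δ * ‖x‖ ≤ ‖b * x + x * b‖ := by
  nontriviality A
  set c := ‖b‖
  have hbc : b ≤ algebraMap ℝ A c :=
    (IsSelfAdjoint.of_ge hb (.algebraMap A (.all δ))).le_algebraMap_norm_self
  have hδc : δ ≤ c := algebraMap_le_algebraMap.mp (hb.trans hbc)
  have hc : 0 < c := hδ.trans_le hδc
  set k := 1 - c⁻¹ • b
  have hk : ‖k‖ ≤ 1 - δ / c := by
    rw [Algebra.algebraMap_eq_smul_one] at hb hbc
    have hk_nonneg : 0 ≤ k := by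
      have := smul_le_smul_of_nonneg_left hbc (inv_nonneg.mpr hc.le)
      rwa [smul_smul, inv_mul_cancel₀ hc.ne', one_smul, ← sub_nonneg] at this
    rw [CStarAlgebra.norm_le_iff_le_algebraMap k (by rw [sub_nonneg, div_le_one hc]; exact hδc),
      Algebra.algebraMap_eq_smul_one, sub_smul, one_smul]
    have := smul_le_smul_of_nonneg_left hb (inv_nonneg.mpr hc.le)
    rw [smul_smul, inv_mul_eq_div] at this
    exact sub_le_sub_left this 1
  have hsplit : b * x + x * b = c • ((2 : ℝ) • x - (k * x + x * k)) := by
    simp only [k, sub_mul, mul_sub, smul_mul_assoc, mul_smul_comm, one_mul, mul_one, smul_sub,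
      smul_add, smul_smul, mul_inv_cancel₀ hc.ne']
    module
  have hkx : ‖k * x + x * k‖ ≤ 2 * (1 - δ / c) * ‖x‖ := calc
    ‖k * x + x * k‖ ≤ ‖k‖ * ‖x‖ + ‖x‖ * ‖k‖ :=
      norm_add_le_of_le (norm_mul_le _ _) (norm_mul_le _ _)
    _ ≤ 2 * (1 - δ / c) * ‖x‖ := by nlinarith [norm_nonneg x]
  calc 2 * δ * ‖x‖ = c * (2 * ‖x‖ - 2 * (1 - δ / c) * ‖x‖) := by field_simp; ring
    _ ≤ c * (‖(2 : ℝ) • x‖ - ‖k * x + x * k‖) := by rw [norm_smul, Real.norm_two]; gcongr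
    _ ≤ c * ‖(2 : ℝ) • x - (k * x + x * k)‖ := by gcongr; exact norm_sub_norm_le _ _
    _ = ‖b * x + x * b‖ := by rw [hsplit, norm_smul, Real.norm_of_nonneg hc.le]

theorem cfc_sqrt_mul_cfc_sqrt {s : A} (hs : 0 ≤ s) : cfc Real.sqrt s * cfc Real.sqrt s = s := by
  rw [← cfc_mul Real.sqrt Real.sqrt s]
  conv_rhs => rw [← cfc_id' ℝ s]
  exact cfc_congr fun t ht => Real.mul_self_sqrt (spectrum_nonneg_of_nonneg hs ht)

theorem algebraMap_sqrt_le_cfc_sqrt {s : A} {ε : ℝ} (hs : algebraMap ℝ A ε ≤ s) :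
    algebraMap ℝ A √ε ≤ cfc Real.sqrt s := by
  have hs_sa : IsSelfAdjoint s := .of_ge hs (.algebraMap A (.all ε))
  rw [algebraMap_le_cfc_iff _ _ _]
  exact fun t ht => Real.sqrt_le_sqrt ((algebraMap_le_iff_le_spectrum hs_sa).mp hs t ht)

end CStarAlgebra

theorem ContinuousLinearMap.algebraMap_le_of_le_re_inner {H : Type*} [NormedAddCommGroup H]
    [InnerProductSpace ℂ H] [CompleteSpace H] {S : H →L[ℂ] H} (hS : IsSelfAdjoint S) {ε : ℝ}
    (h : ∀ ξ : H, ε * ‖ξ‖ ^ 2 ≤ (inner ℂ (S ξ) ξ).re) :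
    algebraMap ℝ (H →L[ℂ] H) ε ≤ S := by
  rw [le_def, isPositive_def']
  refine ⟨hS.sub (.algebraMap _ (.all ε)), fun ξ => ?_⟩
  have hε : (inner ℂ (ε • ξ) ξ).re = ε * ‖ξ‖ ^ 2 := by
    rw [RCLike.real_smul_eq_coe_smul (K := ℂ), inner_smul_real_left, Complex.real_smul,
      Complex.re_ofReal_mul, ← RCLike.re_to_complex, inner_self_eq_norm_sq]
  simpa [reApplyInnerSelf_apply, inner_sub_left, Algebra.algebraMap_eq_smul_one, hε] using h ξ

theorem statement15_general (ε R : ℝ) (hε : 0 < ε) :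
    ∃ C : ℝ, 0 < C ∧
      ∀ (H : Type u) [NormedAddCommGroup H] [InnerProductSpace ℂ H] [CompleteSpace H]
        (S a : H →L[ℂ] H), IsSelfAdjoint S →
        (∀ ξ : H, ε * ‖ξ‖ ^ 2 ≤ (inner ℂ (S ξ) ξ : ℂ).re) →
        (∀ ξ : H, (inner ℂ (S ξ) ξ : ℂ).re ≤ R * ‖ξ‖ ^ 2) →
        ‖cfc Real.sqrt S * a - a * cfc Real.sqrt S‖ ≤ C * ‖S * a - a * S‖ := by
  refine ⟨(2 * √ε)⁻¹, by positivity, fun H _ _ _ S a hS hS_lower _ => ?_⟩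
  have hS_ge : algebraMap ℝ (H →L[ℂ] H) ε ≤ S :=
    ContinuousLinearMap.algebraMap_le_of_le_re_inner hS hS_lower
  set B := cfc Real.sqrt S
  have hB_ge : algebraMap ℝ (H →L[ℂ] H) √ε ≤ B := algebraMap_sqrt_le_cfc_sqrt hS_ge
  have hBB : B * B = S := cfc_sqrt_mul_cfc_sqrt ((algebraMap_nonneg _ hε.le).trans hS_ge)
  rw [inv_mul_eq_div, le_div_iff₀ (by positivity), mul_comm]
  calc 2 * √ε * ‖B * a - a * B‖ ≤ ‖B * (B * a - a * B) + (B * a - a * B) * B‖ :=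
        two_mul_mul_norm_le_norm_mul_add_mul (Real.sqrt_pos.mpr hε) hB_ge _
    _ = ‖S * a - a * S‖ := by rw [← hBB]; noncomm_ring

/-- Commutator estimate for the square root of a strictly positive
operator: for all reals `0 < ε ≤ R` there exists `C > 0` such that for every complex
Hilbert space `H`, every bounded self-adjoint operator `S` on `H` with `ε·1 ≤ S ≤ R·1`
(meaning `ε‖ξ‖² ≤ ⟨Sξ, ξ⟩ ≤ R‖ξ‖²` for all `ξ`), and every bounded operator `a` on `H`,
`‖[S^{1/2}, a]‖ ≤ C·‖[S, a]‖`, where `S^{1/2} = cfc Real.sqrt S` is the positive square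
root of `S` given by the continuous functional calculus. -/
theorem statement15 (ε R : ℝ) (hε : 0 < ε) (hεR : ε ≤ R) :
    ∃ C : ℝ, 0 < C ∧
      ∀ (H : Type u) [NormedAddCommGroup H] [InnerProductSpace ℂ H] [CompleteSpace H]
        (S a : H →L[ℂ] H), IsSelfAdjoint S →
        (∀ ξ : H, ε * ‖ξ‖ ^ 2 ≤ (inner ℂ (S ξ) ξ : ℂ).re) →
        (∀ ξ : H, (inner ℂ (S ξ) ξ : ℂ).re ≤ R * ‖ξ‖ ^ 2) →
        ‖cfc Real.sqrt S * a - a * cfc Real.sqrt S‖ ≤ C * ‖S * a - a * S‖ :=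
  statement15_general ε R hε
end

section
/- Explicit Fourier expansion of the projected commutator vector: for every integer l ≥ 0, P g_l = Σ 2^{-(n+m)/4} e_{2^n − 2^m + l}, where the (absolutely convergent) sum is over all pairs (n, m) ∈ ℕ² with 2^m ≥ l + 1 and 2^n ≥ 2^m − l. -/
/-!
Write `cₙ = 2^(-n/4)`, so that `W e_k = ∑ₙ cₙ (e_{k+2ⁿ} + e_{k-2ⁿ})` in `L²`. As `P` is
idempotent, `P g_l = P M_W (1 - P) (W e_l)`, and `(1 - P) (W e_l) = ∑_{2ᵐ > l} cₘ e_{l-2ᵐ}`.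
Multiplying `e_{l-2ᵐ}` by `W` produces `e_{l-2ᵐ+2ⁿ}` and `e_{l-2ᵐ-2ⁿ}`; the second index is
negative, so `P` kills that term, and keeps the first exactly when `2ⁿ ≥ 2ᵐ - l`. The resulting
double series is dominated by `cₙ cₘ`, hence absolutely summable, and may be summed fiberwise.
-/

open MeasureTheory

noncomputable section

instance : Fact (0 < 2 * Real.pi) := ⟨by positivity⟩

/-- `L²(S¹)`: the circle of circumference `2π` with its normalized arc-length (Haar)
measure. Its orthonormal Fourier basis is `e_l = fourierLp 2 l`, `l ∈ ℤ`. -/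
abbrev CircleL2 : Type := Lp ℂ 2 (@AddCircle.haarAddCircle (2 * Real.pi) _)

/-- The continuous real-valued Weierstrass-type function
`W(ζ) = Σ_{n≥0} 2^{-n/4}(ζ^{2^n} + ζ^{-2^n})`, as a continuous function on the circle
(the series converges uniformly, i.e. in `C(S¹, ℂ)`). -/
def Wfun : C(AddCircle (2 * Real.pi), ℂ) :=
  ∑' n : ℕ, (((2 : ℝ) ^ (-(n : ℝ) / 4) : ℝ) : ℂ) • (fourier (2 ^ n) + fourier (-(2 ^ n : ℤ)))

/-- The element `W·e_l` of `L²(S¹)`. -/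
def WeL2 (l : ℤ) : CircleL2 :=
  ContinuousMap.toLp 2 AddCircle.haarAddCircle ℂ (Wfun * fourier l)

/-- `P` is the Szegő (Hardy) projection: the (unique) bounded operator fixing `e_n` for
`n ≥ 0` and annihilating `e_n` for `n < 0`. -/
def IsSzegoProjection (P : CircleL2 →L[ℂ] CircleL2) : Prop :=
  ∀ n : ℤ, P (fourierLp 2 n) = if 0 ≤ n then fourierLp 2 n else 0

/-- `MW` is the bounded operator of multiplication by `W`: the (unique) bounded operator
sending (the class of) a continuous function `g` to (the class of) `W·g`. -/
def IsWMultiplication (MW : CircleL2 →L[ℂ] CircleL2) : Prop :=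
  ∀ g : C(AddCircle (2 * Real.pi), ℂ),
    MW (ContinuousMap.toLp 2 AddCircle.haarAddCircle ℂ g)
      = ContinuousMap.toLp 2 AddCircle.haarAddCircle ℂ (Wfun * g)

/-- The commutator vector `g_l := (P M_W − M_W P)(W·e_l)`. -/
def commVec (P MW : CircleL2 →L[ℂ] CircleL2) (l : ℕ) : CircleL2 :=
  P (MW (WeL2 l)) - MW (P (WeL2 l))

def wCoeff (n : ℕ) : ℝ := (2 : ℝ) ^ (-(n : ℝ) / 4)

lemma wCoeff_pos (n : ℕ) : 0 < wCoeff n := by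
  unfold wCoeff; positivity

lemma wCoeff_mul_wCoeff (n m : ℕ) :
    wCoeff n * wCoeff m = (2 : ℝ) ^ (-((n : ℝ) + (m : ℝ)) / 4) := by
  rw [wCoeff, wCoeff, ← Real.rpow_add two_pos]
  ring_nf

lemma summable_wCoeff : Summable wCoeff := by
  have hgeom : wCoeff = fun n : ℕ => ((2 : ℝ) ^ (-(1 : ℝ) / 4)) ^ n := by
    funext n
    rw [wCoeff, ← Real.rpow_natCast, ← Real.rpow_mul two_pos.le]
    ring_nf
  rw [hgeom]
  exact summable_geometric_of_lt_one (by positivity)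
    (Real.rpow_lt_one_of_one_lt_of_neg one_lt_two (by norm_num))

lemma summable_wCoeff_mul_wCoeff : Summable fun p : ℕ × ℕ => wCoeff p.1 * wCoeff p.2 :=
  summable_wCoeff.mul_of_nonneg summable_wCoeff (fun n => (wCoeff_pos n).le)
    (fun n => (wCoeff_pos n).le)

lemma hasSum_Wfun :
    HasSum (fun n : ℕ => (wCoeff n : ℂ) • (fourier (2 ^ n) + fourier (-(2 ^ n : ℤ))))
      Wfun := by
  apply Summable.hasSum
  refine .of_norm_bounded (summable_wCoeff.mul_right 2) fun n => ?_
  rw [norm_smul, Complex.norm_real, Real.norm_of_nonneg (wCoeff_pos n).le]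
  refine mul_le_mul_of_nonneg_left ?_ (wCoeff_pos n).le
  calc _ ≤ ‖(fourier (2 ^ n) : C(AddCircle (2 * Real.pi), ℂ))‖ + ‖fourier (-(2 ^ n : ℤ))‖ :=
        norm_add_le _ _
    _ = 2 := by rw [fourier_norm, fourier_norm]; norm_num

lemma fourier_mul_fourier {T : ℝ} (m n : ℤ) :
    (fourier m * fourier n : C(AddCircle T, ℂ)) = fourier (m + n) := by
  ext x
  simp

lemma hasSum_toLp_Wfun_mul_fourier (k : ℤ) :
    HasSum (fun n : ℕ => (wCoeff n : ℂ) •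
        (fourierLp 2 (2 ^ n + k) + fourierLp 2 (k - 2 ^ n) : CircleL2))
      (ContinuousMap.toLp 2 AddCircle.haarAddCircle ℂ (Wfun * fourier k)) := by
  refine (hasSum_Wfun.mapL ((ContinuousMap.toLp 2 AddCircle.haarAddCircle ℂ).comp
    ((ContinuousLinearMap.mul ℂ C(AddCircle (2 * Real.pi), ℂ)).flip (fourier k)))).congr_fun
    fun n => ?_
  simp only [ContinuousLinearMap.comp_apply, ContinuousLinearMap.flip_apply,
    ContinuousLinearMap.mul_apply', fourier_mul_fourier, _root_.map_smul, map_add, neg_add_eq_sub]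

section

variable {P MW : CircleL2 →L[ℂ] CircleL2}

lemma IsWMultiplication.hasSum_apply_fourierLp (hMW : IsWMultiplication MW) (k : ℤ) :
    HasSum (fun n : ℕ => (wCoeff n : ℂ) •
        (fourierLp 2 (2 ^ n + k) + fourierLp 2 (k - 2 ^ n) : CircleL2))
      (MW (fourierLp 2 k)) := by
  rw [fourierLp, hMW]
  exact hasSum_toLp_Wfun_mul_fourier k

namespace IsSzegoProjection

lemma apply_fourierLp_of_nonneg (hP : IsSzegoProjection P) {k : ℤ} (hk : 0 ≤ k) :
    P (fourierLp 2 k) = fourierLp 2 k := by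
  rw [hP, if_pos hk]

lemma apply_fourierLp_of_neg (hP : IsSzegoProjection P) {k : ℤ} (hk : k < 0) :
    P (fourierLp 2 k) = 0 := by
  rw [hP, if_neg hk.not_ge]

lemma comp_self (hP : IsSzegoProjection P) : P.comp P = P := by
  refine ContinuousLinearMap.ext_on (s := Set.range (fourierLp 2))
    (Submodule.dense_iff_topologicalClosure_eq_top.mpr
      (span_fourierLp_closure_eq_top (by norm_num))) ?_
  rintro _ ⟨k, rfl⟩
  rcases le_or_gt 0 k with hk | hk
  · simp [apply_fourierLp_of_nonneg hP hk]
  · simp [apply_fourierLp_of_neg hP hk]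

lemma apply_commVec (hP : IsSzegoProjection P) (l : ℕ) :
    P (commVec P MW l) = P (MW (WeL2 l - P (WeL2 l))) := by
  have hPP : P (P (MW (WeL2 l))) = P (MW (WeL2 l)) := by
    rw [← ContinuousLinearMap.comp_apply, comp_self hP]
  rw [commVec, map_sub, hPP, map_sub, map_sub]

lemma hasSum_sub_apply_WeL2 (hP : IsSzegoProjection P) (l : ℕ) :
    HasSum (fun m : ℕ => if (l : ℤ) < 2 ^ m then (wCoeff m : ℂ) • fourierLp 2 (l - 2 ^ m)
        else (0 : CircleL2))
      (WeL2 l - P (WeL2 l)) := by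
  have hWe := hasSum_toLp_Wfun_mul_fourier l
  refine (hWe.sub (hWe.mapL P)).congr_fun fun m => ?_
  have hplus : (0 : ℤ) ≤ 2 ^ m + l := by positivity
  simp only [_root_.map_smul, map_add, apply_fourierLp_of_nonneg hP hplus, ← smul_sub,
    add_sub_add_left_eq_sub]
  split_ifs with hm
  · rw [apply_fourierLp_of_neg hP (by omega), sub_zero]
  · rw [apply_fourierLp_of_nonneg hP (by omega), sub_self, smul_zero]

lemma hasSum_apply_apply_fourierLp_of_neg (hP : IsSzegoProjection P)
    (hMW : IsWMultiplication MW) {k : ℤ} (hk : k < 0) :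
    HasSum (fun n : ℕ => if 0 ≤ 2 ^ n + k then (wCoeff n : ℂ) • fourierLp 2 (2 ^ n + k)
        else (0 : CircleL2))
      (P (MW (fourierLp 2 k))) := by
  refine ((hMW.hasSum_apply_fourierLp k).mapL P).congr_fun fun n => ?_
  have hminus : k - 2 ^ n < 0 := sub_neg.mpr (hk.trans (by positivity))
  simp only [_root_.map_smul, map_add, apply_fourierLp_of_neg hP hminus, add_zero]
  split_ifs with hn
  · rw [apply_fourierLp_of_nonneg hP hn]
  · rw [apply_fourierLp_of_neg hP (not_le.mp hn), smul_zero]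

end IsSzegoProjection

def projCommVecTerm (l : ℕ) (p : ℕ × ℕ) : CircleL2 :=
  if (l : ℤ) + 1 ≤ 2 ^ p.2 ∧ (2 : ℤ) ^ p.2 - l ≤ 2 ^ p.1 then
    (((2 : ℝ) ^ (-((p.1 : ℝ) + (p.2 : ℝ)) / 4) : ℝ) : ℂ)
      • fourierLp 2 ((2 : ℤ) ^ p.1 - 2 ^ p.2 + l)
  else 0

lemma norm_projCommVecTerm_le (l : ℕ) (p : ℕ × ℕ) :
    ‖projCommVecTerm l p‖ ≤ wCoeff p.1 * wCoeff p.2 := by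
  have hpos := mul_pos (wCoeff_pos p.1) (wCoeff_pos p.2)
  rw [projCommVecTerm]
  split_ifs
  · rw [norm_smul, ← wCoeff_mul_wCoeff, Complex.norm_real, Real.norm_of_nonneg hpos.le,
      orthonormal_fourier.1, mul_one]
  · exact norm_zero.trans_le hpos.le

lemma summable_projCommVecTerm (l : ℕ) : Summable (projCommVecTerm l) :=
  Summable.of_norm_bounded summable_wCoeff_mul_wCoeff (norm_projCommVecTerm_le l)

lemma hasSum_projCommVecTerm_fiber (hP : IsSzegoProjection P) (hMW : IsWMultiplication MW)
    (l m : ℕ) :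
    HasSum (fun n : ℕ => projCommVecTerm l (n, m))
      (P (MW (if (l : ℤ) < 2 ^ m then (wCoeff m : ℂ) • fourierLp 2 (l - 2 ^ m) else 0))) := by
  split_ifs with hm
  · rw [map_smul, map_smul]
    refine ((hP.hasSum_apply_apply_fourierLp_of_neg hMW (k := l - 2 ^ m) (by omega)).const_smul
      (wCoeff m : ℂ)).congr_fun fun n => ?_
    dsimp only [projCommVecTerm]
    by_cases hn : 0 ≤ (2 : ℤ) ^ n + (l - 2 ^ m)
    · rw [if_pos ⟨by omega, by omega⟩, if_pos hn, smul_smul, ← Complex.ofReal_mul,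
        mul_comm (wCoeff m), wCoeff_mul_wCoeff,
        show (2 : ℤ) ^ n + (l - 2 ^ m) = 2 ^ n - 2 ^ m + l by ring]
    · rw [if_neg (by omega), if_neg hn, smul_zero]
  · simp only [map_zero]
    convert hasSum_zero with n
    dsimp only [projCommVecTerm]
    rw [if_neg (by omega)]

lemma hasSum_projCommVecTerm (hP : IsSzegoProjection P) (hMW : IsWMultiplication MW) (l : ℕ) :
    HasSum (projCommVecTerm l) (P (commVec P MW l)) := by
  have hswap : HasSum (fun q : ℕ × ℕ => projCommVecTerm l q.swap) (∑' q, projCommVecTerm l q) :=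
    ((Equiv.prodComm ℕ ℕ).hasSum_iff (f := projCommVecTerm l)).mpr
      (summable_projCommVecTerm l).hasSum
  have hfibers := hswap.prod_fiberwise fun m => hasSum_projCommVecTerm_fiber hP hMW l m
  have htarget := ((hP.hasSum_sub_apply_WeL2 l).mapL MW).mapL P
  rw [hP.apply_commVec, ← hfibers.unique htarget]
  exact (summable_projCommVecTerm l).hasSum

end

/-- Explicit Fourier expansion of the projected commutator vector: for
every integer `l ≥ 0`, `P g_l = Σ 2^{-(n+m)/4} e_{2^n − 2^m + l}`, the (absolutely
convergent) sum ranging over all pairs `(n, m) ∈ ℕ²` with `2^m ≥ l + 1` and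
`2^n ≥ 2^m − l`. -/
theorem statement16 (P MW : CircleL2 →L[ℂ] CircleL2)
    (hP : IsSzegoProjection P) (hMW : IsWMultiplication MW) (l : ℕ) :
    Summable (fun p : {p : ℕ × ℕ // (l : ℤ) + 1 ≤ 2 ^ p.2 ∧ (2 : ℤ) ^ p.2 - l ≤ 2 ^ p.1} =>
      ‖((((2 : ℝ) ^ (-((p.1.1 : ℝ) + (p.1.2 : ℝ)) / 4) : ℝ) : ℂ)
        • fourierLp 2 ((2 : ℤ) ^ p.1.1 - 2 ^ p.1.2 + l) : CircleL2)‖) ∧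
    HasSum (fun p : {p : ℕ × ℕ // (l : ℤ) + 1 ≤ 2 ^ p.2 ∧ (2 : ℤ) ^ p.2 - l ≤ 2 ^ p.1} =>
      (((2 : ℝ) ^ (-((p.1.1 : ℝ) + (p.1.2 : ℝ)) / 4) : ℝ) : ℂ)
        • fourierLp 2 ((2 : ℤ) ^ p.1.1 - 2 ^ p.1.2 + l))
      (P (commVec P MW l)) := by
  have hterm (p : {p : ℕ × ℕ // (l : ℤ) + 1 ≤ 2 ^ p.2 ∧ (2 : ℤ) ^ p.2 - l ≤ 2 ^ p.1}) :
      projCommVecTerm l p = (((2 : ℝ) ^ (-((p.1.1 : ℝ) + (p.1.2 : ℝ)) / 4) : ℝ) : ℂ)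
        • fourierLp 2 ((2 : ℤ) ^ p.1.1 - 2 ^ p.1.2 + l) := if_pos p.2
  constructor
  · exact (summable_wCoeff_mul_wCoeff.subtype _).of_nonneg_of_le (fun _ => norm_nonneg _)
      fun p => hterm p ▸ norm_projCommVecTerm_le l p
  · have hsupp : Function.support (projCommVecTerm l) ⊆
        {p : ℕ × ℕ | (l : ℤ) + 1 ≤ 2 ^ p.2 ∧ (2 : ℤ) ^ p.2 - l ≤ 2 ^ p.1} :=
      fun p hp => by_contra fun h => hp (if_neg h)
    exact ((hasSum_subtype_iff_of_support_subset hsupp).mpr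
      (hasSum_projCommVecTerm hP hMW l)).congr_fun fun p => (hterm p).symm
end
end

section
/- Lower bound witnessing failure of trace-class decay: for every integer l ≥ 1, ‖P g_l‖²_{L²(S¹)} ≥ 1/(2l). Consequently the sequence (‖P g_l‖²)_{l ≥ 1} is not summable. -/
open MeasureTheory

noncomputable section

/-! At a frequency `l ≥ 0` the diagonal projection `P` does not change the `l`-th Fourier
coefficient, so that coefficient of `P g_l` equals the one of `M_W (1 - P)(W e_l)`, namely
`Σ_{k < 0} Ŵ(k - l) Ŵ(l - k)`. Since `Ŵ` is real and even this is a sum of squares, and the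
term `k = l - 2^n` with `2^{n-1} ≤ l < 2^n` alone gives `‖P g_l‖ ≥ Ŵ(2^n)² = 2^{-n/2}`,
hence `‖P g_l‖² ≥ 2^{-n} ≥ 1/(2l)`. Comparison with the harmonic series rules out
summability. -/

open ContinuousMap

section FourierCoefficients

variable {T : ℝ} [Fact (0 < T)]

theorem fourierBasis_repr_toLp (f : C(AddCircle T, ℂ)) (k : ℤ) :
    fourierBasis.repr (toLp (E := ℂ) 2 AddCircle.haarAddCircle ℂ f) k = fourierCoeff f k := by
  rw [fourierBasis_repr, fourierCoeff_toLp]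

def fourierCoeffCLM (k : ℤ) : C(AddCircle T, ℂ) →L[ℂ] ℂ :=
  (innerSL ℂ (fourierLp 2 k)).comp (toLp (E := ℂ) 2 AddCircle.haarAddCircle ℂ)

theorem fourierCoeffCLM_apply (k : ℤ) (f : C(AddCircle T, ℂ)) :
    fourierCoeffCLM k f = fourierCoeff f k := by
  rw [← fourierBasis_repr_toLp, HilbertBasis.repr_apply_apply, coe_fourierBasis]
  rfl

theorem fourierCoeff_tsum {ι : Type*} {f : ι → C(AddCircle T, ℂ)} (hf : Summable f)
    (k : ℤ) : fourierCoeff (⇑(∑' i, f i)) k = ∑' i, fourierCoeff (f i) k := by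
  simp_rw [← fourierCoeffCLM_apply]
  exact (fourierCoeffCLM k).map_tsum hf

theorem fourierCoeff_mul_fourier (f : AddCircle T → ℂ) (l k : ℤ) :
    fourierCoeff (f * ⇑(fourier l)) k = fourierCoeff f (k - l) := by
  unfold fourierCoeff
  congr 1 with x
  rw [Pi.mul_apply, smul_eq_mul, smul_eq_mul, ← mul_assoc, mul_comm _ (f x), mul_assoc,
    ← fourier_add]
  ring_nf

theorem hasSum_fourierBasis_repr_of_multiplication {F : C(AddCircle T, ℂ)}
    {M : Lp ℂ 2 (@AddCircle.haarAddCircle T _) →L[ℂ] Lp ℂ 2 (@AddCircle.haarAddCircle T _)}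
    (hM : ∀ g : C(AddCircle T, ℂ), M (toLp (E := ℂ) 2 AddCircle.haarAddCircle ℂ g)
      = toLp (E := ℂ) 2 AddCircle.haarAddCircle ℂ (F * g))
    (y : Lp ℂ 2 (@AddCircle.haarAddCircle T _)) (l : ℤ) :
    HasSum (fun k => fourierBasis.repr y k * fourierCoeff F (l - k))
      (fourierBasis.repr (M y) l) := by
  have hM_basis (k : ℤ) :
      inner ℂ (fourierBasis l) (M (fourierBasis k)) = fourierCoeff F (l - k) := by
    rw [← HilbertBasis.repr_apply_apply, coe_fourierBasis, hM (fourier k), fourierBasis_repr_toLp,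
      coe_mul, fourierCoeff_mul_fourier]
  have h := (fourierBasis.hasSum_repr y).mapL ((innerSL ℂ (fourierBasis l)).comp M)
  simpa only [ContinuousLinearMap.comp_apply, map_smul, innerSL_apply_apply, smul_eq_mul,
    hM_basis, ← HilbertBasis.repr_apply_apply] using h

end FourierCoefficients

theorem IsSzegoProjection.fourierBasis_repr_apply {P : CircleL2 →L[ℂ] CircleL2}
    (hP : IsSzegoProjection P) (x : CircleL2) (k : ℤ) :
    fourierBasis.repr (P x) k = if 0 ≤ k then fourierBasis.repr x k else 0 := by
  have h : (innerSL ℂ (fourierBasis k)).comp P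
      = if 0 ≤ k then innerSL ℂ (fourierBasis k) else 0 := by
    refine ContinuousLinearMap.ext_on
      (Submodule.dense_iff_topologicalClosure_eq_top.mpr fourierBasis.dense_span) ?_
    rintro _ ⟨n, rfl⟩
    rw [ContinuousLinearMap.comp_apply, coe_fourierBasis, hP n]
    rcases eq_or_ne k n with rfl | hkn
    · split_ifs <;> simp
    · split_ifs <;> simp [orthonormal_fourier.inner_eq_zero hkn]
  rw [HilbertBasis.repr_apply_apply, HilbertBasis.repr_apply_apply]
  by_cases hk : 0 ≤ k <;> simpa [hk] using congr($h x)

def Wcoeff (m : ℤ) : ℝ :=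
  ∑' n : ℕ, if m.natAbs = 2 ^ n then (2 : ℝ) ^ (-(n : ℝ) / 4) else 0

theorem Wcoeff_neg (m : ℤ) : Wcoeff (-m) = Wcoeff m := by
  simp only [Wcoeff, Int.natAbs_neg]

theorem Wcoeff_two_pow (n : ℕ) : Wcoeff (2 ^ n) = (2 : ℝ) ^ (-(n : ℝ) / 4) := by
  rw [Wcoeff, tsum_eq_single n fun m hm => if_neg ?_]
  · simp
  · rw [Int.natAbs_pow]
    exact fun h => hm (Nat.pow_right_injective le_rfl h).symm

theorem summable_two_rpow_neg_div_four : Summable fun n : ℕ => (2 : ℝ) ^ (-(n : ℝ) / 4) := by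
  have h (n : ℕ) : (2 : ℝ) ^ (-(n : ℝ) / 4) = ((2 : ℝ) ^ (-1 / 4 : ℝ)) ^ n := by
    rw [← Real.rpow_mul_natCast (by norm_num)]
    ring_nf
  simp_rw [h]
  exact summable_geometric_of_lt_one (by positivity)
    (Real.rpow_lt_one_of_one_lt_of_neg one_lt_two (by norm_num))

theorem summable_Wfun_terms :
    Summable fun n : ℕ => (((2 : ℝ) ^ (-(n : ℝ) / 4) : ℝ) : ℂ) •
      (fourier (2 ^ n) + fourier (-(2 ^ n : ℤ)) : C(AddCircle (2 * Real.pi), ℂ)) := by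
  refine .of_norm_bounded (summable_two_rpow_neg_div_four.mul_left 2) fun n => ?_
  rw [norm_smul, Complex.norm_real, Real.norm_of_nonneg (by positivity), mul_comm]
  gcongr
  exact (norm_add_le _ _).trans (by rw [fourier_norm, fourier_norm]; norm_num)

theorem fourierCoeff_Wfun (m : ℤ) : fourierCoeff Wfun m = Wcoeff m := by
  rw [Wfun, fourierCoeff_tsum summable_Wfun_terms, Wcoeff, Complex.ofReal_tsum]
  congr 1 with n
  rw [← fourierCoeffCLM_apply, map_smul, map_add, fourierCoeffCLM_apply, fourierCoeffCLM_apply,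
    fourierCoeff_fourier, fourierCoeff_fourier]
  have h_single : (Pi.single (2 ^ n : ℤ) (1 : ℂ) : ℤ → ℂ) m
      + (Pi.single (-(2 ^ n : ℤ)) (1 : ℂ) : ℤ → ℂ) m
      = if m.natAbs = 2 ^ n then 1 else 0 := by
    have h2n : (0 : ℤ) < 2 ^ n := by positivity
    by_cases h : m.natAbs = 2 ^ n
    · rcases Int.natAbs_eq_iff.mp h with rfl | rfl <;> simp [Pi.single_apply] <;> omega
    · have h_ne : m ≠ 2 ^ n := by rintro rfl; simp [Int.natAbs_pow] at h
      have h_ne_neg : m ≠ -2 ^ n := by rintro rfl; simp [Int.natAbs_pow] at h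
      simp [h, h_ne, h_ne_neg]
  rw [h_single]
  split_ifs <;> simp

theorem hasSum_fourierBasis_repr_P_commVec {P MW : CircleL2 →L[ℂ] CircleL2}
    (hP : IsSzegoProjection P) (hMW : IsWMultiplication MW) (l : ℕ) :
    HasSum (fun k : ℤ => ((if 0 ≤ k then 0 else Wcoeff (l - k) ^ 2 : ℝ) : ℂ))
      (fourierBasis.repr (P (commVec P MW l)) l) := by
  set y := WeL2 l - P (WeL2 l)
  have h_repr_y (k : ℤ) :
      fourierBasis.repr y k = if 0 ≤ k then 0 else (Wcoeff (l - k) : ℂ) := by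
    rw [map_sub, lp.coeFn_sub, Pi.sub_apply, hP.fourierBasis_repr_apply, WeL2,
      fourierBasis_repr_toLp, coe_mul, fourierCoeff_mul_fourier, fourierCoeff_Wfun, ← Wcoeff_neg,
      neg_sub]
    split_ifs <;> simp
  have h_comm : fourierBasis.repr (P (commVec P MW l)) l = fourierBasis.repr (MW y) l := by
    rw [hP.fourierBasis_repr_apply, if_pos (by positivity), commVec, map_sub, map_sub, map_sub,
      lp.coeFn_sub, lp.coeFn_sub, Pi.sub_apply, Pi.sub_apply, hP.fourierBasis_repr_apply,
      if_pos (by positivity)]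
  rw [h_comm]
  convert hasSum_fourierBasis_repr_of_multiplication hMW y l using 2 with k
  rw [h_repr_y, fourierCoeff_Wfun]
  split_ifs <;> push_cast <;> ring

theorem Wcoeff_two_pow_sq_le_norm_P_commVec {P MW : CircleL2 →L[ℂ] CircleL2}
    (hP : IsSzegoProjection P) (hMW : IsWMultiplication MW) {l n : ℕ} (hln : l < 2 ^ n) :
    Wcoeff (2 ^ n) ^ 2 ≤ ‖P (commVec P MW l)‖ := by
  have h := (hasSum_fourierBasis_repr_P_commVec hP hMW l).mapL Complex.reCLM
  simp only [Complex.reCLM_apply, Complex.ofReal_re] at h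
  have hln' : (l : ℤ) < 2 ^ n := by exact_mod_cast hln
  have h_term := le_hasSum h ((l : ℤ) - 2 ^ n) fun _ _ => by split_ifs <;> positivity
  rw [if_neg (by omega), sub_sub_cancel] at h_term
  calc _ ≤ _ := h_term
    _ ≤ ‖fourierBasis.repr (P (commVec P MW l)) l‖ := Complex.re_le_norm _
    _ ≤ ‖fourierBasis.repr (P (commVec P MW l))‖ := lp.norm_apply_le_norm two_ne_zero _ _
    _ = _ := LinearIsometryEquiv.norm_map _ _

theorem one_div_two_mul_le_norm_P_commVec_sq {P MW : CircleL2 →L[ℂ] CircleL2}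
    (hP : IsSzegoProjection P) (hMW : IsWMultiplication MW) {l : ℕ} (hl : 1 ≤ l) :
    1 / (2 * (l : ℝ)) ≤ ‖P (commVec P MW l)‖ ^ 2 := by
  set n := Nat.log 2 l + 1
  have hln : l < 2 ^ n := Nat.lt_pow_succ_log_self one_lt_two l
  have h2n : 2 ^ n ≤ 2 * l := by
    rw [pow_succ, mul_comm]
    exact Nat.mul_le_mul_left 2 (Nat.pow_log_le_self 2 (by omega))
  have h_coeff : (Wcoeff (2 ^ n) ^ 2) ^ 2 = ((2 : ℝ) ^ n)⁻¹ := by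
    rw [Wcoeff_two_pow, ← pow_mul, ← Real.rpow_mul_natCast (by norm_num), ← Real.rpow_natCast,
      ← Real.rpow_neg (by norm_num)]
    norm_num
  calc 1 / (2 * (l : ℝ)) ≤ ((2 : ℝ) ^ n)⁻¹ := by
        rw [one_div]
        gcongr
        exact_mod_cast h2n
    _ = (Wcoeff (2 ^ n) ^ 2) ^ 2 := h_coeff.symm
    _ ≤ _ := by
        gcongr
        exact Wcoeff_two_pow_sq_le_norm_P_commVec hP hMW hln

theorem not_summable_one_div_two_mul_succ :
    ¬ Summable fun l : ℕ => 1 / (2 * ((l + 1 : ℕ) : ℝ)) := by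
  intro h
  have h' : Summable fun l : ℕ => 1 / (2 * (l : ℝ)) := (summable_nat_add_iff 1).mp h
  exact Real.not_summable_one_div_natCast ((h'.mul_left 2).congr fun l => by ring)

/-- Lower bound witnessing failure of trace-class decay: for every integer
`l ≥ 1`, `‖P g_l‖² ≥ 1/(2l)`. Consequently the sequence `(‖P g_l‖²)_{l ≥ 1}` is not
summable. -/
theorem statement18 (P MW : CircleL2 →L[ℂ] CircleL2)
    (hP : IsSzegoProjection P) (hMW : IsWMultiplication MW) :
    (∀ l : ℕ, 1 ≤ l → 1 / (2 * (l : ℝ)) ≤ ‖P (commVec P MW l)‖ ^ 2) ∧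
    ¬ Summable (fun l : ℕ => ‖P (commVec P MW (l + 1))‖ ^ 2) := by
  have h_lower (l : ℕ) (hl : 1 ≤ l) := one_div_two_mul_le_norm_P_commVec_sq hP hMW hl
  refine ⟨h_lower, fun h_summable => not_summable_one_div_two_mul_succ ?_⟩
  exact h_summable.of_nonneg_of_le (fun _ => by positivity) fun l => h_lower (l + 1) l.succ_pos
end
end
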